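/- arXiv:2511.22731 — 3 statements merged into one kernel-verified Lean document; each statement's English description precedes it below -/
import Mathlib

section
/- Let a, x, y be positive reals with x ≥ y and x > 2a, and suppose 2·cosh²(a) + cosh(y) − cosh(x) = 0. Define f(λ) = 2·cosh²(λa) + cosh(λy) − cosh(λx). Then f(λ) < 0 for all λ > 1. -/
/-!
For `f = coshDefect a x y`, writing `2 cosh² (ta) = cosh (2ta) + 1` gives
`f' - x f = (2a sinh - x cosh)(2ta) + (y sinh - x cosh)(ty) + x (e^{-tx} - 1)`,
which is negative for `t > 0` because `x > 2a` and `x ≥ y`. Hence `e^{-xt} f t` is strictly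
decreasing on `[1, ∞)`, and it vanishes at `t = 1`.
-/

open Real

theorem neg_of_hasDerivAt_lt_mul_self {f f' : ℝ → ℝ} {c t₀ : ℝ}
    (hf : ∀ t, HasDerivAt f (f' t) t) (hf₀ : f t₀ = 0) (hlt : ∀ t > t₀, f' t < c * f t) :
    ∀ t > t₀, f t < 0 := by
  set g : ℝ → ℝ := fun t => exp (-c * t) * f t
  have hg : ∀ t, HasDerivAt g (exp (-c * t) * (f' t - c * f t)) t := fun t => by
    have hexp : HasDerivAt (fun t => exp (-c * t)) (exp (-c * t) * -c) t := by
      simpa using ((hasDerivAt_id t).const_mul (-c)).exp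
    exact (hexp.mul (hf t)).congr_deriv (by ring)
  have hanti : StrictAntiOn g (Set.Ici t₀) := by
    refine strictAntiOn_of_deriv_neg (convex_Ici t₀)
      (fun t _ => (hg t).continuousAt.continuousWithinAt) fun t ht => ?_
    rw [interior_Ici] at ht
    rw [(hg t).deriv]
    exact mul_neg_of_pos_of_neg (exp_pos _) (sub_neg.2 (hlt t ht))
  intro t ht
  have hgt : g t < 0 := by
    simpa [g, hf₀] using hanti Set.self_mem_Ici (Set.mem_Ici.2 ht.le) ht
  exact (pos_iff_neg_of_mul_neg hgt).mp (exp_pos _)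

theorem abs_sinh_lt_cosh (s : ℝ) : |sinh s| < cosh s := by
  rw [abs_sinh, ← cosh_abs]
  exact sinh_lt_cosh _

theorem mul_sinh_lt_mul_cosh {b c : ℝ} (hbc : |b| ≤ c) (hc : 0 < c) (s : ℝ) :
    b * sinh s < c * cosh s :=
  calc b * sinh s ≤ |b| * |sinh s| := by rw [← abs_mul]; exact le_abs_self _
    _ ≤ c * |sinh s| := by gcongr
    _ < c * cosh s := by gcongr; exact abs_sinh_lt_cosh s

noncomputable def coshDefect (a x y t : ℝ) : ℝ :=
  2 * cosh (t * a) ^ 2 + cosh (t * y) - cosh (t * x)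

theorem hasDerivAt_coshDefect (a x y t : ℝ) :
    HasDerivAt (coshDefect a x y)
      (2 * a * sinh (2 * (t * a)) + y * sinh (t * y) - x * sinh (t * x)) t := by
  have hlin : ∀ b, HasDerivAt (fun t : ℝ => t * b) b t := fun b => by
    simpa using (hasDerivAt_id t).mul_const b
  refine ((((hlin a).cosh.pow 2).const_mul 2).add (hlin y).cosh).sub (hlin x).cosh
    |>.congr_deriv ?_
  rw [sinh_two_mul]
  ring

theorem coshDefect_deriv_lt {a x y t : ℝ} (ha : 0 < a)
    (hy : 0 < y) (hxy : y ≤ x) (hxa : 2 * a < x) (ht : 0 < t) :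
    2 * a * sinh (2 * (t * a)) + y * sinh (t * y) - x * sinh (t * x)
      < x * coshDefect a x y t := by
  have hx : 0 < x := by linarith
  have h2a : 2 * a * sinh (2 * (t * a)) < x * cosh (2 * (t * a)) :=
    mul_sinh_lt_mul_cosh (by rw [abs_of_pos (by positivity)]; exact hxa.le) hx _
  have hyx : y * sinh (t * y) < x * cosh (t * y) :=
    mul_sinh_lt_mul_cosh (by rwa [abs_of_pos hy]) hx _
  have hexp : cosh (t * x) - sinh (t * x) ≤ 1 := by
    rw [cosh_sub_sinh]
    exact exp_le_one_iff.2 (neg_nonpos.2 (by positivity))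
  have hcosh2 : 2 * cosh (t * a) ^ 2 = cosh (2 * (t * a)) + 1 := by
    rw [cosh_two_mul, cosh_sq]
    ring
  rw [coshDefect, hcosh2]
  linear_combination h2a + hyx + x * hexp

theorem stmt_0_general (a x y : ℝ) (ha : 0 < a) (hy : 0 < y)
    (hxy : y ≤ x) (hxa : 2 * a < x)
    (h1 : 2 * (Real.cosh a) ^ 2 + Real.cosh y - Real.cosh x = 0) :
    ∀ l : ℝ, 1 < l →
      2 * (Real.cosh (l * a)) ^ 2 + Real.cosh (l * y) - Real.cosh (l * x) < 0 :=
  neg_of_hasDerivAt_lt_mul_self (hasDerivAt_coshDefect a x y)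
    (by simpa only [coshDefect, one_mul] using h1)
    fun _ ht => coshDefect_deriv_lt ha hy hxy hxa (by linarith)

theorem stmt_0 (a x y : ℝ) (ha : 0 < a) (hx : 0 < x) (hy : 0 < y)
    (hxy : y ≤ x) (hxa : 2 * a < x)
    (h1 : 2 * (Real.cosh a) ^ 2 + Real.cosh y - Real.cosh x = 0) :
    ∀ l : ℝ, 1 < l →
      2 * (Real.cosh (l * a)) ^ 2 + Real.cosh (l * y) - Real.cosh (l * x) < 0 :=
  stmt_0_general a x y ha hy hxy hxa h1
end

section
/- Let a, x, y be positive reals with x ≥ y and x > 2a. Define f(λ) = 2·cosh²(λa) + cosh(λy) − cosh(λx). Then for every λ > 0, f'(λ) < (2a − x)·cosh(2λa) + x·f(λ). -/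
open Real

theorem stmt_1 (a x y : ℝ) (ha : 0 < a) (hx : 0 < x) (hy : 0 < y)
    (hxy : y ≤ x) (hxa : 2 * a < x) :
    ∀ l : ℝ, 0 < l →
      deriv (fun t : ℝ => 2 * (Real.cosh (t * a)) ^ 2 + Real.cosh (t * y) - Real.cosh (t * x)) l
        < (2 * a - x) * Real.cosh (2 * l * a)
          + x * (2 * (Real.cosh (l * a)) ^ 2 + Real.cosh (l * y) - Real.cosh (l * x)) := by
  intro l hl
  have hda : HasDerivAt (fun t : ℝ => Real.cosh (t * a)) (Real.sinh (l * a) * a) l :=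
    by simpa using ((hasDerivAt_id l).mul_const a).cosh
  have hdy : HasDerivAt (fun t : ℝ => Real.cosh (t * y)) (Real.sinh (l * y) * y) l :=
    by simpa using ((hasDerivAt_id l).mul_const y).cosh
  have hdx : HasDerivAt (fun t : ℝ => Real.cosh (t * x)) (Real.sinh (l * x) * x) l :=
    by simpa using ((hasDerivAt_id l).mul_const x).cosh
  have hD : HasDerivAt
      (fun t : ℝ => 2 * (Real.cosh (t * a)) ^ 2 + Real.cosh (t * y) - Real.cosh (t * x))
      (2 * (2 * Real.cosh (l * a) ^ 1 * (Real.sinh (l * a) * a)) + Real.sinh (l * y) * y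
        - Real.sinh (l * x) * x) l := by
    exact (((hda.pow 2).const_mul 2).add hdy).sub hdx
  rw [hD.deriv]
  have hc2 : Real.cosh (2 * l * a) = 2 * Real.cosh (l * a) ^ 2 - 1 := by
    rw [mul_assoc, Real.cosh_two_mul, Real.sinh_sq]; ring
  have hs1 : Real.sinh (l * a) < Real.cosh (l * a) := Real.sinh_lt_cosh _
  have hs2 : Real.sinh (l * y) < Real.cosh (l * y) := Real.sinh_lt_cosh _
  have hsp : 0 < Real.sinh (l * y) := Real.sinh_pos_iff.2 (by positivity)
  have hcp : 0 < Real.cosh (l * a) := Real.cosh_pos _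
  have hsap : 0 < Real.sinh (l * a) := Real.sinh_pos_iff.2 (by positivity)
  have h4 : Real.cosh (l * x) - Real.sinh (l * x) ≤ 1 := by
    rw [Real.cosh_sub_sinh]
    exact Real.exp_le_one_iff.2 (by nlinarith)
  rw [hc2]
  nlinarith [Real.sinh_sq (l * a), mul_nonneg ha.le (sq_nonneg (Real.cosh (l * a) - Real.sinh (l * a))),
    mul_nonneg (sub_nonneg.2 hxy) hsp.le, mul_pos hx (sub_pos.2 hs2),
    mul_nonneg hx.le (by linarith : (0:ℝ) ≤ 1 - (Real.cosh (l * x) - Real.sinh (l * x)))]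
end

section
/- Let N : [0,∞) → ℝ be nondecreasing with N(t) ~ c·t^m·e^t (c > 0, m ≥ 0 integer) and let N_f(t) satisfy |N_f(t) − F·N(t)| ≤ ε·N(t) for all t > L′, and |N_f(t)| ≤ M·N(t) for all t. Then limsup_{s→1⁺} |(∫₀^∞ e^{−st} dN_f(t))/(∫₀^∞ e^{−st} dN(t)) − F| ≤ ε. -/
/-!
Write `L g s = ∫_{t ≥ 0} e^{-st} g(t) dt`; then `s · L g s` is the Laplace–Stieltjes transform
`∫ e^{-st} dg` (for `g(0) = 0`), and the factors `s` cancel in the quotient.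
Since `N(t) ≥ (c/2) e^t` for large `t`, `L N s ≥ (c/2)/(s - 1) - O(1) → ∞` as `s ↓ 1`.
On `[0, T]` with `T > L'`, `N` is bounded by monotonicity, so
`|N_f(t) - F N(t)| ≤ ε N(t) + K e^{-t}` for all `t ≥ 0`; as `L (e^{-t}) s = 1/(s + 1)` stays
bounded, `|L N_f s - F · L N s| ≤ ε · L N s + K`, and dividing by `L N s → ∞` gives the claim.
-/

open Real Filter MeasureTheory Set Topology

noncomputable section

def laplace (g : ℝ → ℝ) (s : ℝ) : ℝ := ∫ t in Ici 0, exp (-s * t) * g t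

def LaplaceIntegrable (g : ℝ → ℝ) (s : ℝ) : Prop :=
  IntegrableOn (fun t => exp (-s * t) * g t) (Ici 0)

section Laplace

variable {g h : ℝ → ℝ} {s : ℝ}

theorem exp_neg_mul_mul_exp_mul (s a t : ℝ) :
    exp (-s * t) * exp (a * t) = exp ((a - s) * t) := by
  rw [← exp_add]; ring_nf

theorem laplaceIntegrable_exp_mul {a : ℝ} (has : a < s) :
    LaplaceIntegrable (fun t => exp (a * t)) s := by
  simp only [LaplaceIntegrable, exp_neg_mul_mul_exp_mul]
  exact (integrableOn_Ici_iff_integrableOn_Ioi).2 (integrableOn_exp_mul_Ioi (by linarith) 0)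

theorem laplace_exp_mul {a : ℝ} (has : a < s) :
    laplace (fun t => exp (a * t)) s = (s - a)⁻¹ := by
  simp only [laplace, exp_neg_mul_mul_exp_mul]
  rw [integral_Ici_eq_integral_Ioi, integral_exp_mul_Ioi (by linarith)]
  rw [mul_zero, exp_zero, neg_div, ← inv_eq_one_div, ← inv_neg, neg_sub]

theorem laplaceIntegrable_pow_mul_exp (m : ℕ) (hs : 1 < s) :
    LaplaceIntegrable (fun t => t ^ m * exp t) s := by
  have key := integrableOn_rpow_mul_exp_neg_mul_rpow (p := 1) (s := m) (b := s - 1)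
    (by linarith [(Nat.cast_nonneg m : (0 : ℝ) ≤ m)]) one_pos (by linarith)
  refine (integrableOn_Ici_iff_integrableOn_Ioi).2
    (key.congr_fun (fun t _ => ?_) measurableSet_Ioi)
  simp only [rpow_natCast, rpow_one]
  rw [mul_left_comm, ← exp_add]; ring_nf

theorem LaplaceIntegrable.add (hg : LaplaceIntegrable g s) (hh : LaplaceIntegrable h s) :
    LaplaceIntegrable (fun t => g t + h t) s := by
  simp only [LaplaceIntegrable, mul_add]
  exact Integrable.add hg hh

theorem LaplaceIntegrable.sub (hg : LaplaceIntegrable g s) (hh : LaplaceIntegrable h s) :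
    LaplaceIntegrable (fun t => g t - h t) s := by
  simp only [LaplaceIntegrable, mul_sub]
  exact Integrable.sub hg hh

theorem LaplaceIntegrable.const_mul (hg : LaplaceIntegrable g s) (K : ℝ) :
    LaplaceIntegrable (fun t => K * g t) s := by
  simp only [LaplaceIntegrable, mul_left_comm _ K]
  exact Integrable.const_mul hg K

theorem LaplaceIntegrable.abs (hg : LaplaceIntegrable g s) :
    LaplaceIntegrable (fun t => |g t|) s := by
  have := Integrable.abs hg
  simp only [abs_mul, abs_of_pos (exp_pos _)] at this
  exact this

theorem LaplaceIntegrable.mono (hh : LaplaceIntegrable h s) (hg : Measurable g)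
    (hgh : ∀ t ≥ 0, |g t| ≤ h t) : LaplaceIntegrable g s := by
  refine Integrable.mono' hh (by fun_prop) ((ae_restrict_iff' measurableSet_Ici).2
    (Eventually.of_forall fun t ht => ?_))
  rw [norm_mul, norm_of_nonneg (exp_pos _).le, Real.norm_eq_abs]
  exact mul_le_mul_of_nonneg_left (hgh t ht) (exp_pos _).le

theorem laplace_add (hg : LaplaceIntegrable g s) (hh : LaplaceIntegrable h s) :
    laplace (fun t => g t + h t) s = laplace g s + laplace h s := by
  simp only [laplace, mul_add]
  exact integral_add hg hh

theorem laplace_sub (hg : LaplaceIntegrable g s) (hh : LaplaceIntegrable h s) :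
    laplace (fun t => g t - h t) s = laplace g s - laplace h s := by
  simp only [laplace, mul_sub]
  exact integral_sub hg hh

theorem laplace_const_mul (K : ℝ) : laplace (fun t => K * g t) s = K * laplace g s := by
  simp only [laplace, mul_left_comm _ K]
  exact integral_const_mul K _

theorem laplace_mono (hg : LaplaceIntegrable g s) (hh : LaplaceIntegrable h s)
    (hgh : ∀ t ≥ 0, g t ≤ h t) : laplace g s ≤ laplace h s :=
  setIntegral_mono_on hg hh measurableSet_Ici fun t ht =>
    mul_le_mul_of_nonneg_left (hgh t ht) (exp_pos _).le

theorem abs_laplace_le : |laplace g s| ≤ laplace (fun t => |g t|) s := by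
  simp only [laplace]
  refine abs_integral_le_integral_abs.trans_eq
    (integral_congr_ae (Eventually.of_forall fun t => ?_))
  simp [abs_mul, abs_of_pos (exp_pos _)]

theorem laplace_const_mul_exp_neg_le {K : ℝ} (hs : 0 ≤ s) (hK : 0 ≤ K) :
    laplace (fun t => K * exp (-1 * t)) s ≤ K := by
  rw [laplace_const_mul, laplace_exp_mul (by linarith)]
  exact mul_le_of_le_one_right hK (inv_le_one_of_one_le₀ (by linarith))

end Laplace

theorem LaplaceIntegrable.of_abs_le_pow_mul_exp_add {g : ℝ → ℝ} {s A B : ℝ} {m : ℕ}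
    (hg : Measurable g) (hgrowth : ∀ t ≥ 0, |g t| ≤ A * (t ^ m * exp t) + B) (hs : 1 < s) :
    LaplaceIntegrable g s := by
  have hconst : LaplaceIntegrable (fun t => B * exp (0 * t)) s :=
    (laplaceIntegrable_exp_mul (by linarith)).const_mul B
  refine (((laplaceIntegrable_pow_mul_exp m hs).const_mul A).add hconst).mono hg fun t ht => ?_
  simpa using hgrowth t ht

theorem tendsto_laplace_atTop {g : ℝ → ℝ} {a K : ℝ} (ha : 0 < a) (hK : 0 ≤ K)
    (hint : ∀ s > 1, LaplaceIntegrable g s) (hlow : ∀ t ≥ 0, a * exp t ≤ g t + K * exp (-t)) :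
    Tendsto (laplace g) (𝓝[>] 1) atTop := by
  have hpole : Tendsto (fun s : ℝ => a * (s - 1)⁻¹ - K) (𝓝[>] 1) atTop := by
    refine tendsto_atTop_add_const_right _ _ (Tendsto.const_mul_atTop ha ?_)
    refine tendsto_inv_nhdsGT_zero.comp (tendsto_nhdsWithin_iff.2 ⟨?_, ?_⟩)
    · simpa using (tendsto_id.sub_const 1).mono_left (nhdsWithin_le_nhds (a := (1 : ℝ)))
    · filter_upwards [self_mem_nhdsWithin] with s (hs : 1 < s)
      exact sub_pos.2 hs
  refine tendsto_atTop_mono' _ (eventually_mem_nhdsWithin.mono fun s (hs : 1 < s) => ?_) hpole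
  have hexp : LaplaceIntegrable (fun t => exp (1 * t)) s := laplaceIntegrable_exp_mul hs
  have hexp_neg : LaplaceIntegrable (fun t => exp (-1 * t)) s :=
    laplaceIntegrable_exp_mul (by linarith)
  have hmono := laplace_mono (hexp.const_mul a) ((hint s hs).add (hexp_neg.const_mul K))
    (by simpa using hlow)
  rw [laplace_const_mul, laplace_exp_mul hs, laplace_add (hint s hs) (hexp_neg.const_mul K)]
    at hmono
  linarith [laplace_const_mul_exp_neg_le (s := s) (by linarith) hK]

theorem abs_laplace_le_mul_laplace_add {u v : ℝ → ℝ} {s ε K : ℝ} (hs : 0 ≤ s) (hK : 0 ≤ K)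
    (hu : LaplaceIntegrable u s) (hv : LaplaceIntegrable v s)
    (huv : ∀ t ≥ 0, |u t| ≤ ε * v t + K * exp (-t)) :
    |laplace u s| ≤ ε * laplace v s + K := by
  have hexp_neg : LaplaceIntegrable (fun t => exp (-1 * t)) s :=
    laplaceIntegrable_exp_mul (by linarith)
  have hmono := laplace_mono hu.abs ((hv.const_mul ε).add (hexp_neg.const_mul K))
    (by simpa using huv)
  rw [laplace_add (hv.const_mul ε) (hexp_neg.const_mul K), laplace_const_mul] at hmono
  linarith [abs_laplace_le (g := u) (s := s), laplace_const_mul_exp_neg_le (s := s) hs hK]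

theorem limsup_abs_div_sub_le {α : Type*} {l : Filter α} [l.NeBot] {I J : α → ℝ} {F ε C : ℝ}
    (hI : Tendsto I l atTop) (h : ∀ᶠ x in l, |J x - F * I x| ≤ ε * I x + C) :
    limsup (fun x => |J x / I x - F|) l ≤ ε := by
  have hlim : Tendsto (fun x => ε + C / I x) l (𝓝 ε) := by
    simpa using tendsto_const_nhds.add (tendsto_const_nhds.div_atTop hI)
  have hle : ∀ᶠ x in l, |J x / I x - F| ≤ ε + C / I x := by
    filter_upwards [h, hI.eventually_gt_atTop 0] with x hx hIx
    rw [div_sub' hIx.ne', abs_div, abs_of_pos hIx, div_le_iff₀ hIx, add_mul,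
      div_mul_cancel₀ _ hIx.ne', mul_comm (I x)]
    exact hx
  calc limsup (fun x => |J x / I x - F|) l ≤ limsup (fun x => ε + C / I x) l :=
        limsup_le_limsup hle (isCoboundedUnder_le_of_le l fun x => abs_nonneg _)
          hlim.isBoundedUnder_le
    _ = ε := hlim.limsup_eq

theorem exists_le_add_mul_exp_neg {u v : ℝ → ℝ} {T D : ℝ}
    (hinit : ∀ t ∈ Icc 0 T, u t ≤ v t + D) (htail : ∀ t ≥ T, u t ≤ v t) :
    ∃ K ≥ 0, ∀ t ≥ 0, u t ≤ v t + K * exp (-t) := by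
  refine ⟨max D 0 * exp T, by positivity, fun t ht => ?_⟩
  rcases le_total t T with htT | hTt
  · have : D ≤ max D 0 * exp T * exp (-t) := by
      rw [mul_assoc, ← exp_add]
      exact (le_max_left D 0).trans
        (le_mul_of_one_le_right (le_max_right D 0) (one_le_exp (by linarith)))
    linarith [hinit t ⟨ht, htT⟩]
  · have : 0 ≤ max D 0 * exp T * exp (-t) := by positivity
    linarith [htail t hTt]

theorem exists_mul_exp_le_add_mul_exp_neg {g : ℝ → ℝ} {a B T : ℝ}
    (hinit : ∀ t ∈ Icc 0 T, |g t| ≤ B) (htail : ∀ t ≥ T, a * exp t ≤ g t) :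
    ∃ K ≥ 0, ∀ t ≥ 0, a * exp t ≤ g t + K * exp (-t) :=
  exists_le_add_mul_exp_neg (u := fun t => a * exp t) (D := |a| * exp T + B)
    (fun t ht => by
      have : a * exp t ≤ |a| * exp T :=
        (le_abs_self _).trans (by rw [abs_mul, abs_of_pos (exp_pos t)]; gcongr; exact ht.2)
      linarith [neg_le_of_abs_le (hinit t ht)])
    htail

theorem abs_le_pow_mul_exp_add_of_abs_le {g : ℝ → ℝ} {A B T : ℝ} {m : ℕ} (hA : 0 ≤ A)
    (hB : 0 ≤ B) (hinit : ∀ t ∈ Icc 0 T, |g t| ≤ B)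
    (htail : ∀ t ≥ T, |g t| ≤ A * (t ^ m * exp t)) :
    ∀ t ≥ 0, |g t| ≤ A * (t ^ m * exp t) + B := by
  intro t ht
  rcases le_total t T with htT | hTt
  · have : 0 ≤ A * (t ^ m * exp t) := by positivity
    linarith [hinit t ⟨ht, htT⟩]
  · linarith [htail t hTt]
theorem eventually_bounds_of_tendsto_div {N : ℝ → ℝ} {c : ℝ} {m : ℕ} (hc : 0 < c)
    (hN : Tendsto (fun t => N t / (c * t ^ m * exp t)) atTop (𝓝 1)) :
    ∀ᶠ t in atTop, c / 2 * exp t ≤ N t ∧ |N t| ≤ 2 * c * (t ^ m * exp t) := by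
  filter_upwards [hN.eventually (Ioo_mem_nhds (by norm_num : (1 / 2 : ℝ) < 1) one_lt_two),
    eventually_ge_atTop 1] with t ⟨hlo, hhi⟩ ht
  have htm : 1 ≤ t ^ m := one_le_pow₀ ht
  have hX : 0 < c * t ^ m * exp t := by positivity
  rw [lt_div_iff₀ hX] at hlo
  rw [div_lt_iff₀ hX] at hhi
  have hNpos : 0 < N t := by linarith
  refine ⟨?_, by rw [abs_of_pos hNpos]; linarith⟩
  nlinarith [exp_pos t]

theorem abs_le_max_of_monotoneOn {N : ℝ → ℝ} (hmono : MonotoneOn N (Ici 0)) {t T : ℝ}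
    (ht : t ∈ Icc 0 T) : |N t| ≤ max |N 0| |N T| :=
  abs_le_max_abs_abs (hmono self_mem_Ici ht.1 ht.1)
    (hmono ht.1 (ht.1.trans ht.2 : (0 : ℝ) ≤ T) ht.2)

theorem abs_sub_mul_le_mul_add {x y B M F ε : ℝ} (hM : 0 ≤ M) (hε : 0 ≤ ε) (hx : |x| ≤ B)
    (hy : |y| ≤ M * x) : |y - F * x| ≤ ε * x + (M + |F| + ε) * B := by
  have hFx : |F * x| ≤ |F| * B := by rw [abs_mul]; exact mul_le_mul_of_nonneg_left hx (abs_nonneg F)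
  have hMx : M * x ≤ M * B := mul_le_mul_of_nonneg_left ((le_abs_self x).trans hx) hM
  have hεx : -(ε * B) ≤ ε * x := by
    rw [← mul_neg]; exact mul_le_mul_of_nonneg_left (neg_le_of_abs_le hx) hε
  linarith [abs_sub y (F * x)]

end

theorem stmt_18 (N : ℝ → ℝ) (hmono : MonotoneOn N (Set.Ici 0))
    (c : ℝ) (hc : 0 < c) (m : ℕ)
    (hN : Tendsto (fun t => N t / (c * t ^ m * Real.exp t)) atTop (nhds 1))
    (Nf : ℝ → ℝ) (hNf : Measurable Nf) (hNmeas : Measurable N)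
    (F ε M L' : ℝ) (hε : 0 ≤ ε) (hM : 0 ≤ M)
    (hclose : ∀ t, L' < t → |Nf t - F * N t| ≤ ε * N t)
    (hbound : ∀ t, 0 ≤ t → |Nf t| ≤ M * N t) :
    Filter.limsup
      (fun s : ℝ =>
        |(s * ∫ t in Set.Ici (0 : ℝ), Real.exp (-s * t) * Nf t) /
            (s * ∫ t in Set.Ici (0 : ℝ), Real.exp (-s * t) * N t) - F|)
      (nhdsWithin 1 (Set.Ioi 1)) ≤ ε := by
  obtain ⟨T, hT⟩ :=
    ((eventually_bounds_of_tendsto_div hc hN).and (eventually_gt_atTop L')).exists_forall_of_atTop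
  set B := max |N 0| |N T|
  have hNB : ∀ t ∈ Icc 0 T, |N t| ≤ B := fun t ht => abs_le_max_of_monotoneOn hmono ht
  have hNgrowth : ∀ t ≥ 0, |N t| ≤ 2 * c * (t ^ m * exp t) + B :=
    abs_le_pow_mul_exp_add_of_abs_le (by positivity) ((abs_nonneg _).trans (le_max_left _ _))
      hNB fun t ht => (hT t ht).1.2
  have hNint (s : ℝ) (hs : 1 < s) : LaplaceIntegrable N s :=
    .of_abs_le_pow_mul_exp_add hNmeas hNgrowth hs
  have hNfint (s : ℝ) (hs : 1 < s) : LaplaceIntegrable Nf s :=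
    ((hNint s hs).abs.const_mul M).mono hNf fun t ht =>
      (hbound t ht).trans (mul_le_mul_of_nonneg_left (le_abs_self _) hM)
  obtain ⟨K₁, hK₁, hlow⟩ := exists_mul_exp_le_add_mul_exp_neg hNB fun t ht => (hT t ht).1.1
  obtain ⟨K₂, hK₂, hsmall⟩ := exists_le_add_mul_exp_neg (u := fun t => |Nf t - F * N t|)
    (v := fun t => ε * N t) (D := (M + |F| + ε) * B)
    (fun t ht => abs_sub_mul_le_mul_add hM hε (hNB t ht) (hbound t ht.1))
    (fun t ht => hclose t (hT t ht).2)
  have hItop : Tendsto (laplace N) (𝓝[>] 1) atTop :=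
    tendsto_laplace_atTop (half_pos hc) hK₁ hNint hlow
  have hest : ∀ᶠ s in 𝓝[>] 1, |laplace Nf s - F * laplace N s| ≤ ε * laplace N s + K₂ := by
    filter_upwards [self_mem_nhdsWithin] with s (hs : 1 < s)
    rw [← laplace_const_mul, ← laplace_sub (hNfint s hs) ((hNint s hs).const_mul F)]
    exact abs_laplace_le_mul_laplace_add (by linarith) hK₂
      ((hNfint s hs).sub ((hNint s hs).const_mul F)) (hNint s hs) hsmall
  calc _ = limsup (fun s => |laplace Nf s / laplace N s - F|) (𝓝[>] 1) := by
        refine limsup_congr (eventually_mem_nhdsWithin.mono fun s (hs : 1 < s) => ?_)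
        rw [mul_div_mul_left _ _ (by linarith : s ≠ 0)]
        rfl
    _ ≤ ε := limsup_abs_div_sub_le hItop hest
end
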